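/- The schema Flattening, (p > ((p∧q) > r)) ↔ ((p∧q) > r), is valid on an order frame (W,<) if and only if the frame is flat. -/

import Mathlib

/-- Sentences of the language L: atoms p₀,p₁,…, negation, conjunction, and the
binary conditional `>` (written `cond`). -/
inductive Formula : Type
  | atom : ℕ → Formula
  | neg : Formula → Formula
  | conj : Formula → Formula → Formula
  | cond : Formula → Formula → Formula
  deriving DecidableEq

namespace Formula

/-- Material implication, defined as usual: p → q := ¬(p ∧ ¬q). -/
def impl (p q : Formula) : Formula := (p.conj q.neg).neg
/-- Disjunction, defined as usual: p ∨ q := ¬(¬p ∧ ¬q). -/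
def disj (p q : Formula) : Formula := (p.neg.conj q.neg).neg
/-- Material biconditional, defined as usual. -/
def biimp (p q : Formula) : Formula := (p.impl q).conj (q.impl p)
/-- □p abbreviates ¬p > p. -/
def box (p : Formula) : Formula := p.neg.cond p
/-- ◇p abbreviates ¬□¬p. -/
def dia (p : Formula) : Formula := p.neg.box.neg
/-- ⊥ abbreviates p₀ ∧ ¬p₀. -/
def bot : Formula := (atom 0).conj (atom 0).neg

end Formula

/-- An order frame: a nonempty type of worlds `W` together with, for each world
`w`, a strict well-order `lt w` (writing `lt w x y` for `x <_w y`) of a subset of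
`W` (the field of `lt w`: the relation is transitive, well-founded, and connected
on its field), such that `x <_w y` implies `w = x` or `w <_w x`. -/
structure OrderFrame (W : Type) : Type where
  nonempty : Nonempty W
  lt : W → W → W → Prop
  trans : ∀ w x y z, lt w x y → lt w y z → lt w x z
  wf : ∀ w, WellFounded (lt w)
  connected : ∀ w x y, (∃ z, lt w x z ∨ lt w z x) → (∃ z, lt w y z ∨ lt w z y) →
      x ≠ y → lt w x y ∨ lt w y x
  center : ∀ w x y, lt w x y → x = w ∨ lt w w x

namespace OrderFrame

variable {W : Type}

/-- Accessibility: `v ∈ R(w)` where `R(w) = {w} ∪ {v : w <_w v}`. -/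
def acc (F : OrderFrame W) (w v : W) : Prop := v = w ∨ F.lt w w v

/-- `x ≤_w y` iff `x, y ∈ R(w)` and not `y <_w x`. -/
def wkle (F : OrderFrame W) (w x y : W) : Prop :=
  F.acc w x ∧ F.acc w y ∧ ¬ F.lt w y x

end OrderFrame

/-- Truth at a world of an order model: atoms via the valuation `V`, Booleans
classically, and `p > q` is true at `w` iff either no world in `R(w)` satisfies `p`,
or there is `y ∈ R(w)` satisfying `p ∧ q` such that no `x <_w y` satisfies `p`. -/
def Truth {W : Type} (F : OrderFrame W) (V : ℕ → Set W) : Formula → W → Prop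
  | .atom n, w => w ∈ V n
  | .neg p, w => ¬ Truth F V p w
  | .conj p q, w => Truth F V p w ∧ Truth F V q w
  | .cond p q, w =>
      (∀ v, F.acc w v → ¬ Truth F V p v) ∨
      ∃ y, F.acc w y ∧ Truth F V p y ∧ Truth F V q y ∧
        ∀ x, F.lt w x y → ¬ Truth F V p x

/-- A frame is semi-flat iff for all w,x,y,z: if x <_w y and (y ≤_w z or
z ∈ R(x)\R(w)), then y ≤_x z. -/
def SemiFlat {W : Type} (F : OrderFrame W) : Prop :=
  ∀ w x y z, F.lt w x y →
    (F.wkle w y z ∨ (F.acc x z ∧ ¬ F.acc w z)) → F.wkle x y z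

/-- The accessibility relation of the frame is transitive. -/
def TransAcc {W : Type} (F : OrderFrame W) : Prop :=
  ∀ w u v, F.acc w u → F.acc u v → F.acc w v

/-- A frame is flat iff it is semi-flat and its accessibility relation is
transitive. -/
def Flat {W : Type} (F : OrderFrame W) : Prop := SemiFlat F ∧ TransAcc F

/-! On a flat frame, let `y` be the `<_w`-first `p`-world of `R(w)`. Semi-flatness and transitivity
make the `(p ∧ q)`-worlds of `R(w)` exactly those of `R(y)`, in the same order, so `(p ∧ q) > r`
has the same truth value at `w` and at `y`; and `p > X` holds at `w` iff `X` holds at `y`.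
Conversely, a failure of transitivity or of semi-flatness is refuted by an instance of Flattening
whose atoms are true at two or three of the worlds involved. -/

lemma truth_biimp {W : Type} (F : OrderFrame W) (V : ℕ → Set W) (w : W) (a b : Formula) :
    Truth F V (a.biimp b) w ↔ (Truth F V a w ↔ Truth F V b w) := by
  change (¬(Truth F V a w ∧ ¬ Truth F V b w) ∧ ¬(Truth F V b w ∧ ¬ Truth F V a w)) ↔ _
  tauto

namespace OrderFrame

variable {W : Type} (F : OrderFrame W)

lemma lt_irrefl (w a : W) : ¬ F.lt w a a := fun h => (F.wf w).asymmetric a a h h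

lemma lt_asymm {w a b : W} (h : F.lt w a b) : ¬ F.lt w b a := (F.wf w).asymmetric a b h

lemma ne_of_lt {w a b : W} (h : F.lt w a b) : a ≠ b := by
  rintro rfl
  exact F.lt_irrefl w a h

lemma not_lt_self (w a : W) : ¬ F.lt w a w := by
  intro h
  rcases F.center w a w h with rfl | h'
  · exact F.lt_irrefl a a h
  · exact F.lt_asymm h h'

lemma acc_self (w : W) : F.acc w w := Or.inl rfl

lemma acc_of_lt_left {w a b : W} (h : F.lt w a b) : F.acc w a := F.center w a b h

lemma acc_of_lt_right {w a b : W} (h : F.lt w a b) : F.acc w b := by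
  rcases F.acc_of_lt_left h with rfl | h'
  · exact Or.inr h
  · exact Or.inr (F.trans w w a b h' h)

lemma lt_or_lt_of_acc {w a b : W} (ha : F.acc w a) (hb : F.acc w b) (hne : a ≠ b) :
    F.lt w a b ∨ F.lt w b a := by
  rcases ha with rfl | ha
  · rcases hb with rfl | hb
    · exact absurd rfl hne
    · exact Or.inl hb
  · rcases hb with rfl | hb
    · exact Or.inr ha
    · exact F.connected w a b ⟨w, Or.inr ha⟩ ⟨w, Or.inr hb⟩ hne

/-- The truth condition of `p > q` at `w`, with `A` and `C` the truth sets of `p` and `q`. -/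
def Cond (A C : W → Prop) (w : W) : Prop :=
  (∀ v, F.acc w v → ¬ A v) ∨ ∃ y, F.acc w y ∧ A y ∧ C y ∧ ∀ x, F.lt w x y → ¬ A x

def IsFirst (A : W → Prop) (w y : W) : Prop :=
  F.acc w y ∧ A y ∧ ∀ x, F.lt w x y → ¬ A x

def FlatteningHolds : Prop :=
  ∀ (P Q R : W → Prop) (w : W),
    F.Cond P (F.Cond (fun v => P v ∧ Q v) R) w ↔ F.Cond (fun v => P v ∧ Q v) R w

variable {F} {A B C P : W → Prop} {u v w x y z : W}

lemma exists_isFirst (h : ∃ v, F.acc w v ∧ A v) : ∃ y, F.IsFirst A w y := by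
  obtain ⟨y, ⟨hy, hAy⟩, hmin⟩ := (F.wf w).has_min {v | F.acc w v ∧ A v} h
  exact ⟨y, hy, hAy, fun x hx hAx => hmin x ⟨F.acc_of_lt_left hx, hAx⟩ hx⟩

lemma IsFirst.eq (hx : F.IsFirst A w x) (hy : F.IsFirst A w y) : x = y := by
  by_contra hne
  rcases F.lt_or_lt_of_acc hx.1 hy.1 hne with h | h
  · exact hy.2.2 x h hx.2.1
  · exact hx.2.2 y h hy.2.1

lemma cond_iff_of_isFirst (hx : F.IsFirst A w x) : F.Cond A C w ↔ C x := by
  refine ⟨?_, fun hC => Or.inr ⟨x, hx.1, hx.2.1, hC, hx.2.2⟩⟩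
  rintro (hno | ⟨y, hy, hAy, hCy, hmin⟩)
  · exact absurd hx.2.1 (hno x hx.1)
  · rwa [hx.eq ⟨hy, hAy, hmin⟩]

lemma cond_false_iff : F.Cond A (fun _ => False) w ↔ ∀ v, F.acc w v → ¬ A v :=
  or_iff_left fun ⟨_, _, _, h, _⟩ => h

lemma IsFirst.lt_of_ne (hy : F.IsFirst P w y) (hu : F.acc w u) (hPu : P u) (hne : u ≠ y) :
    F.lt w y u :=
  (F.lt_or_lt_of_acc hu hy.1 hne).resolve_left fun h => hy.2.2 u h hPu

lemma IsFirst.acc_of_semiFlat (hSF : SemiFlat F) (hy : F.IsFirst P w y) (hu : F.acc w u)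
    (hPu : P u) : F.acc y u := by
  rcases eq_or_ne u y with rfl | hne
  · exact F.acc_self u
  · exact (hSF w y u u (hy.lt_of_ne hu hPu hne) (Or.inl ⟨hu, hu, F.lt_irrefl w u⟩)).1

lemma IsFirst.not_lt_of_semiFlat (hSF : SemiFlat F) (hy : F.IsFirst P w y) (hu : F.acc w u)
    (hPu : P u) (hv : F.acc w v) (hvu : ¬ F.lt w v u) : ¬ F.lt y v u := by
  rcases eq_or_ne u y with rfl | hne
  · exact F.not_lt_self u v
  · exact (hSF w y u v (hy.lt_of_ne hu hPu hne) (Or.inl ⟨hu, hv, hvu⟩)).2.2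

lemma IsFirst.lt_iff_lt_of_semiFlat (hSF : SemiFlat F) (hy : F.IsFirst P w y)
    (hu : F.acc w u) (hPu : P u) (hv : F.acc w v) (hPv : P v) : F.lt w u v ↔ F.lt y u v := by
  refine ⟨fun h => ?_, fun h => by_contra fun h' => hy.not_lt_of_semiFlat hSF hv hPv hu h' h⟩
  refine (F.lt_or_lt_of_acc (hy.acc_of_semiFlat hSF hu hPu) (hy.acc_of_semiFlat hSF hv hPv)
    (F.ne_of_lt h)).resolve_right ?_
  exact hy.not_lt_of_semiFlat hSF hu hPu hv (F.lt_asymm h)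

lemma IsFirst.cond_iff_cond_of_flat (hF : Flat F) (hBP : ∀ v, B v → P v)
    (hy : F.IsFirst P w y) : F.Cond B C y ↔ F.Cond B C w := by
  obtain ⟨hSF, hTA⟩ := hF
  have hlt : ∀ u v, F.acc w u → B u → F.acc w v → B v → (F.lt w u v ↔ F.lt y u v) :=
    fun u v hu hBu hv hBv => hy.lt_iff_lt_of_semiFlat hSF hu (hBP u hBu) hv (hBP v hBv)
  constructor
  · rintro (hno | ⟨z, hz, hBz, hCz, hmin⟩)
    · exact Or.inl fun v hv hBv => hno v (hy.acc_of_semiFlat hSF hv (hBP v hBv)) hBv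
    · have hwz := hTA w y z hy.1 hz
      refine Or.inr ⟨z, hwz, hBz, hCz, fun t ht hBt => hmin t ?_ hBt⟩
      exact (hlt t z (F.acc_of_lt_left ht) hBt hwz hBz).1 ht
  · rintro (hno | ⟨z, hz, hBz, hCz, hmin⟩)
    · exact Or.inl fun v hv => hno v (hTA w y v hy.1 hv)
    · refine Or.inr ⟨z, hy.acc_of_semiFlat hSF hz (hBP z hBz), hBz, hCz, fun t ht hBt => ?_⟩
      exact hmin t ((hlt t z (hTA w y t hy.1 (F.acc_of_lt_left ht)) hBt hz hBz).2 ht) hBt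

lemma cond_cond_iff_of_flat (hF : Flat F) (hBP : ∀ v, B v → P v) (w : W) :
    F.Cond P (F.Cond B C) w ↔ F.Cond B C w := by
  by_cases hP : ∃ v, F.acc w v ∧ P v
  · obtain ⟨y, hy⟩ := exists_isFirst hP
    exact (cond_iff_of_isFirst hy).trans (hy.cond_iff_cond_of_flat hF hBP)
  · push Not at hP
    exact iff_of_true (Or.inl hP) (Or.inl fun v hv hBv => hP v hv (hBP v hBv))

lemma flatteningHolds_of_flat (hF : Flat F) : F.FlatteningHolds :=
  fun _ _ _ w => cond_cond_iff_of_flat hF (fun _ h => h.1) w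

lemma acc_iff_acc_of_flatteningHolds (h : F.FlatteningHolds) (hx : F.acc w x)
    (hz : F.acc w z → F.lt w x z) : F.acc x z ↔ F.acc w z := by
  have hfirst : F.IsFirst (fun t => t = x ∨ t = z) w x := by
    refine ⟨hx, Or.inl rfl, ?_⟩
    rintro t ht (rfl | rfl)
    · exact F.lt_irrefl w t ht
    · exact F.lt_asymm ht (hz (F.acc_of_lt_left ht))
  -- both sides of this instance say that `z` is not accessible, from `x` and from `w` respectively
  have hflat := h (fun t => t = x ∨ t = z) (· = z) (fun _ => False) w
  have hz_only : ∀ a, (∀ v, F.acc a v → ¬ ((v = x ∨ v = z) ∧ v = z)) ↔ ¬ F.acc a z :=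
    fun a => ⟨fun hno ha => hno z ha ⟨Or.inr rfl, rfl⟩, fun hza v hv hv' => hza (hv'.2 ▸ hv)⟩
  rw [cond_iff_of_isFirst hfirst, cond_false_iff, cond_false_iff, hz_only, hz_only] at hflat
  exact not_iff_not.1 hflat

lemma transAcc_of_flatteningHolds (h : F.FlatteningHolds) : TransAcc F := by
  intro w u v hwu huv
  by_contra hwv
  exact hwv ((acc_iff_acc_of_flatteningHolds h hwu fun hwv' => absurd hwv' hwv).1 huv)

lemma acc_of_lt_of_flatteningHolds (h : F.FlatteningHolds) (hxz : F.lt w x z) : F.acc x z :=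
  (acc_iff_acc_of_flatteningHolds h (F.acc_of_lt_left hxz) fun _ => hxz).2 (F.acc_of_lt_right hxz)

lemma wkle_of_flatteningHolds (h : F.FlatteningHolds) (hxy : F.lt w x y) (hxz : F.acc x z)
    (hzy : ¬ F.lt w z y) (hz : F.acc w z → F.lt w x z) : F.wkle x y z := by
  let P : W → Prop := fun t => t = x ∨ t = y ∨ t = z
  let Q : W → Prop := fun t => t = y ∨ t = z
  have hx : F.IsFirst P w x := by
    refine ⟨F.acc_of_lt_left hxy, Or.inl rfl, ?_⟩
    rintro t ht (rfl | rfl | rfl)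
    · exact F.lt_irrefl w t ht
    · exact F.lt_asymm ht hxy
    · exact F.lt_asymm ht (hz (F.acc_of_lt_left ht))
  have hy : F.IsFirst (fun t => P t ∧ Q t) w y := by
    refine ⟨F.acc_of_lt_right hxy, ⟨Or.inr (Or.inl rfl), Or.inl rfl⟩, ?_⟩
    rintro t ht ⟨-, rfl | rfl⟩
    · exact F.lt_irrefl w t ht
    · exact hzy ht
  have hcond := (h P Q (· = y) w).2 ((cond_iff_of_isFirst hy).2 rfl)
  rw [cond_iff_of_isFirst hx] at hcond
  rcases hcond with hno | ⟨s, hs, -, rfl, hmin⟩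
  · exact absurd ⟨Or.inr (Or.inr rfl), Or.inr rfl⟩ (hno z hxz)
  · exact ⟨hs, hxz, fun hzs => hmin z hzs ⟨Or.inr (Or.inr rfl), Or.inr rfl⟩⟩

lemma semiFlat_of_flatteningHolds (h : F.FlatteningHolds) : SemiFlat F := by
  rintro w x y z hxy (⟨-, hwz, hzy⟩ | ⟨hxz, hwz⟩)
  · have hxz : F.lt w x z := by
      rcases eq_or_ne y z with rfl | hne
      · exact hxy
      · exact F.trans w x y z hxy
          ((F.lt_or_lt_of_acc (F.acc_of_lt_right hxy) hwz hne).resolve_right hzy)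
    exact wkle_of_flatteningHolds h hxy (acc_of_lt_of_flatteningHolds h hxz) hzy fun _ => hxz
  · exact wkle_of_flatteningHolds h hxy hxz (fun hzy => hwz (F.acc_of_lt_left hzy))
      fun hwz' => absurd hwz' hwz

lemma flatteningHolds_iff_valid :
    F.FlatteningHolds ↔ ∀ (V : ℕ → Set W) (w : W) (p q r : Formula),
      Truth F V ((p.cond ((p.conj q).cond r)).biimp ((p.conj q).cond r)) w := by
  refine ⟨fun h V w p q r => (truth_biimp ..).2 (h _ _ _ w), fun h P Q R w => ?_⟩
  have hatoms := h (fun | 0 => {t | P t} | 1 => {t | Q t} | _ => {t | R t}) w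
    (.atom 0) (.atom 1) (.atom 2)
  exact (truth_biimp ..).1 hatoms

end OrderFrame

/-- the schema Flattening, (p > ((p∧q) > r)) ↔ ((p∧q) > r), is valid
on an order frame iff the frame is flat. -/
theorem flattening_characterizes_flat {W : Type} (F : OrderFrame W) :
    (∀ (V : ℕ → Set W) (w : W) (p q r : Formula),
      Truth F V ((p.cond ((p.conj q).cond r)).biimp ((p.conj q).cond r)) w) ↔
    Flat F := by
  rw [← F.flatteningHolds_iff_valid]
  exact ⟨fun h => ⟨OrderFrame.semiFlat_of_flatteningHolds h,
    OrderFrame.transAcc_of_flatteningHolds h⟩, OrderFrame.flatteningHolds_of_flat⟩
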